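/- arXiv:2211.06416 — 6 statements merged into one kernel-verified Lean document; each statement's English description precedes it below -/
import Mathlib

section
/- Every infinite connected graph contains as an induced subgraph one of: an infinite complete graph K_infty, an infinite star K_{1,infty}, or a ray P_infty. -/
/-!
If some vertex has infinite degree, the infinite Ramsey theorem applied to its neighbourhood
gives an infinite clique or an infinite independent set of neighbours, i.e. an induced star.
Otherwise the graph is locally finite, and Kőnig's argument produces a geodesic ray from a root
`u`: step repeatedly to a neighbour one farther from `u` that still lies on shortest paths from
`u` to infinitely many vertices. A geodesic ray is induced, because the distances from `u` of two
adjacent vertices differ by at most one.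
-/

theorem Set.pairwise_image_of_lt {α : Type*} {r : α → α → Prop} (hr : Std.Symm r)
    {a : ℕ → α} {I : Set ℕ} (h : ∀ m ∈ I, ∀ n ∈ I, m < n → r (a m) (a n)) :
    (a '' I).Pairwise r := by
  rintro _ ⟨m, hm, rfl⟩ _ ⟨n, hn, rfl⟩ hne
  rcases lt_or_gt_of_ne (ne_of_apply_ne a hne) with hmn | hnm
  · exact h m hm n hn hmn
  · exact hr.symm _ _ (h n hn m hm hnm)

namespace SimpleGraph

variable {V : Type*} (G : SimpleGraph V)

theorem exists_pivot_of_infinite {s : Set V} (hs : s.Infinite) :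
    ∃ a ∈ s, ∃ t ⊆ s, a ∉ t ∧ t.Infinite ∧
      ((∀ x ∈ t, G.Adj a x) ∨ ∀ x ∈ t, ¬G.Adj a x) := by
  obtain ⟨a, ha⟩ := hs.nonempty
  have hrest : (s \ {a}).Infinite := hs.sdiff (Set.finite_singleton a)
  rw [← Set.inter_union_sdiff (s \ {a}) (G.neighborSet a), Set.infinite_union] at hrest
  have ha_rest : a ∉ s \ {a} := fun h => h.2 rfl
  rcases hrest with hadj | hnadj
  · exact ⟨a, ha, _, Set.inter_subset_left.trans Set.sdiff_subset,
      fun h => ha_rest h.1, hadj, Or.inl fun x hx => hx.2⟩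
  · exact ⟨a, ha, _, Set.sdiff_subset.trans Set.sdiff_subset,
      fun h => ha_rest h.1, hnadj, Or.inr fun x hx => hx.2⟩

theorem exists_isClique_or_isIndepSet_of_seq {a : ℕ → V} (ha : a.Injective)
    (h : ∀ m, (∀ n, m < n → G.Adj (a m) (a n)) ∨ ∀ n, m < n → ¬G.Adj (a m) (a n)) :
    ∃ t ⊆ Set.range a, t.Infinite ∧ (G.IsClique t ∨ G.IsIndepSet t) := by
  set I : Set ℕ := {m | ∀ n, m < n → G.Adj (a m) (a n)}
  have hI : (I ∪ Iᶜ).Infinite := by rw [Set.union_compl_self]; exact Set.infinite_univ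
  rcases Set.infinite_union.mp hI with hI | hIc
  · refine ⟨a '' I, Set.image_subset_range a I, hI.image ha.injOn, Or.inl ?_⟩
    exact Set.pairwise_image_of_lt G.symm fun m hm n _ hmn => hm n hmn
  · refine ⟨a '' Iᶜ, Set.image_subset_range a _, hIc.image ha.injOn, Or.inr ?_⟩
    exact Set.pairwise_image_of_lt ⟨fun _ _ h h' => h h'.symm⟩
      fun m hm n _ hmn => (h m).resolve_left hm n hmn

theorem exists_isClique_or_isIndepSet_of_infinite {s : Set V} (hs : s.Infinite) :
    ∃ t ⊆ s, t.Infinite ∧ (G.IsClique t ∨ G.IsIndepSet t) := by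
  have : Nonempty V := ⟨hs.nonempty.some⟩
  choose! pivot hpivot rest hrest hpivot_rest hrest_inf hrest_adj using
    fun (t : Set V) (ht : t.Infinite) => G.exists_pivot_of_infinite ht
  set A : ℕ → Set V := fun n => rest^[n] s
  have hA_succ : ∀ n, A (n + 1) = rest (A n) := fun n => Function.iterate_succ_apply' rest n s
  have hA_inf : ∀ n, (A n).Infinite := by
    intro n
    induction n with
    | zero => exact hs
    | succ n ih => rw [hA_succ]; exact hrest_inf _ ih
  have hA_anti : Antitone A :=
    antitone_nat_of_succ_le fun n => (hA_succ n).symm ▸ hrest _ (hA_inf n)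
  have hlater : ∀ m n, m < n → pivot (A n) ∈ A (m + 1) :=
    fun m n hmn => hA_anti hmn (hpivot _ (hA_inf n))
  have hinj : (fun n => pivot (A n)).Injective := by
    refine Function.Injective.of_lt_imp_ne fun m n hmn heq => ?_
    have := hlater m n hmn
    rw [hA_succ, ← heq] at this
    exact hpivot_rest _ (hA_inf m) this
  obtain ⟨t, hts, ht, hhom⟩ := G.exists_isClique_or_isIndepSet_of_seq hinj fun m => by
    rcases hrest_adj _ (hA_inf m) with hadj | hnadj
    · exact Or.inl fun n hmn => hadj _ (hA_succ m ▸ hlater m n hmn)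
    · exact Or.inr fun n hmn => hnadj _ (hA_succ m ▸ hlater m n hmn)
  refine ⟨t, ?_, ht, hhom⟩
  rintro _ hx
  obtain ⟨n, rfl⟩ := hts hx
  exact hA_anti (Nat.zero_le n) (hpivot _ (hA_inf n))

/-- The vertices `w` such that some shortest path from `u` to `w` passes through `v`. -/
def shadow (u v : V) : Set V := {w | G.dist u w = G.dist u v + G.dist v w}

variable {G}

theorem shadow_self_eq_univ (u : V) : G.shadow u u = Set.univ := by
  simp [shadow]

theorem Preconnected.exists_adj_dist_succ_of_mem_shadow (hG : G.Preconnected) {u v w : V}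
    (hw : w ∈ G.shadow u v) (hvw : v ≠ w) :
    ∃ c, G.Adj v c ∧ G.dist u c = G.dist u v + 1 ∧ w ∈ G.shadow u c := by
  obtain ⟨p, hp⟩ := (hG v w).exists_walk_length_eq_dist
  cases p with
  | nil => exact absurd rfl hvw
  | @cons _ c _ hvc q =>
    have hcw : G.dist c w ≤ q.length := dist_le q
    have huc : G.dist u c ≤ G.dist u v + G.dist v c := (hG v c).dist_triangle_right u
    have huw : G.dist u w ≤ G.dist u c + G.dist c w := (hG c w).dist_triangle_right u
    have hvc' : G.dist v c = 1 := dist_eq_one_iff_adj.mpr hvc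
    simp only [shadow, Set.mem_ofPred_eq, Walk.length_cons] at hw hp ⊢
    exact ⟨c, hvc, by omega, by omega⟩

theorem Preconnected.exists_adj_infinite_shadow (hG : G.Preconnected) {u v : V}
    (hfin : (G.neighborSet v).Finite) (hv : (G.shadow u v).Infinite) :
    ∃ c, G.Adj v c ∧ G.dist u c = G.dist u v + 1 ∧ (G.shadow u c).Infinite := by
  set C := {c ∈ G.neighborSet v | G.dist u c = G.dist u v + 1}
  have hcover : G.shadow u v ⊆ insert v (⋃ c ∈ C, G.shadow u c) := by
    intro w hw
    rcases eq_or_ne v w with rfl | hvw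
    · exact Set.mem_insert _ _
    obtain ⟨c, hvc, hc, hwc⟩ := hG.exists_adj_dist_succ_of_mem_shadow hw hvw
    exact Set.mem_insert_of_mem _ (Set.mem_biUnion ⟨hvc, hc⟩ hwc)
  by_contra! hC
  have hC_fin : C.Finite := hfin.subset (Set.sep_subset _ _)
  exact hv (((hC_fin.biUnion fun c hc => hC c hc.1 hc.2).insert v).subset hcover)

theorem Preconnected.exists_seq_adj_dist_eq [Infinite V] (hG : G.Preconnected)
    (hfin : ∀ v, (G.neighborSet v).Finite) (u : V) :
    ∃ f : ℕ → V, f 0 = u ∧ (∀ n, G.Adj (f n) (f (n + 1))) ∧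
      ∀ n, G.dist u (f n) = n := by
  choose! next hnext_adj hnext_dist hnext_inf using
    fun v (hv : (G.shadow u v).Infinite) => hG.exists_adj_infinite_shadow (hfin v) hv
  set f : ℕ → V := fun n => next^[n] u
  have hf_succ : ∀ n, f (n + 1) = next (f n) := fun n => Function.iterate_succ_apply' next n u
  have hf_inf : ∀ n, (G.shadow u (f n)).Infinite := by
    intro n
    induction n with
    | zero => simpa [f, shadow_self_eq_univ] using Set.infinite_univ
    | succ n ih => rw [hf_succ]; exact hnext_inf _ ih
  refine ⟨f, rfl, fun n => hf_succ n ▸ hnext_adj _ (hf_inf n), fun n => ?_⟩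
  induction n with
  | zero => exact dist_self
  | succ n ih => rw [hf_succ, hnext_dist _ (hf_inf n), ih]

theorem nonempty_hasse_nat_embedding_of_dist_eq {f : ℕ → V}
    (hadj : ∀ n, G.Adj (f n) (f (n + 1))) (hdist : ∀ n, G.dist (f 0) (f n) = n) :
    Nonempty (hasse ℕ ↪g G) := by
  have hinj : f.Injective := fun i j hij => by
    simpa only [hdist] using congrArg (G.dist (f 0)) hij
  refine ⟨⟨⟨f, hinj⟩, ?_⟩⟩
  intro i j
  change G.Adj (f i) (f j) ↔ _
  rw [hasse_adj, Nat.covBy_iff_add_one_eq, Nat.covBy_iff_add_one_eq]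
  constructor
  · intro hij
    have hne : i ≠ j := fun h => hij.ne (congrArg f h)
    have := hij.diff_dist_adj (u := f 0)
    rw [hdist, hdist] at this
    omega
  · rintro (rfl | rfl)
    exacts [hadj i, (hadj j).symm]

theorem Preconnected.nonempty_hasse_nat_embedding [Infinite V] (hG : G.Preconnected)
    (hfin : ∀ v, (G.neighborSet v).Finite) : Nonempty (hasse ℕ ↪g G) := by
  obtain ⟨u⟩ : Nonempty V := inferInstance
  obtain ⟨f, rfl, hadj, hdist⟩ := hG.exists_seq_adj_dist_eq hfin u
  exact nonempty_hasse_nat_embedding_of_dist_eq hadj hdist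

end SimpleGraph

/-- Every infinite connected graph contains as an induced subgraph one of:
an infinite complete graph `K_∞` (an infinite clique), an infinite star
`K_{1,∞}` (a center adjacent to infinitely many pairwise non-adjacent leaves,
induced), or a ray `P_∞` (a one-way infinite induced path). -/
theorem infinite_connected_induced {V : Type*} [Infinite V] (G : SimpleGraph V)
    (hconn : G.Connected) :
    (∃ s : Set V, s.Infinite ∧ ∀ x ∈ s, ∀ y ∈ s, x ≠ y → G.Adj x y) ∨
    (∃ (c : V) (s : Set V), s.Infinite ∧ c ∉ s ∧ (∀ x ∈ s, G.Adj c x) ∧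
        ∀ x ∈ s, ∀ y ∈ s, ¬ G.Adj x y) ∨
    (∃ f : ℕ → V, Function.Injective f ∧
        ∀ i j, G.Adj (f i) (f j) ↔ (i = j + 1 ∨ j = i + 1)) := by
  by_cases hdeg : ∃ c, (G.neighborSet c).Infinite
  · obtain ⟨c, hc⟩ := hdeg
    obtain ⟨t, htc, ht, hclique | hindep⟩ := G.exists_isClique_or_isIndepSet_of_infinite hc
    · exact Or.inl ⟨t, ht, hclique⟩
    · refine Or.inr (Or.inl ⟨c, t, ht, fun hct => G.irrefl (htc hct), htc, ?_⟩)
      exact fun x hx y hy hxy => hindep hx hy hxy.ne hxy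
  · obtain ⟨e⟩ := hconn.preconnected.nonempty_hasse_nat_embedding fun v =>
      Set.not_infinite.mp fun hv => hdeg ⟨v, hv⟩
    refine Or.inr (Or.inr ⟨e, e.injective, fun i j => ?_⟩)
    rw [e.map_adj_iff, SimpleGraph.hasse_adj, Nat.covBy_iff_add_one_eq, Nat.covBy_iff_add_one_eq]
    omega
end

section
/- If an infinite messy ladder has a cross (e, f), then it has a full cross whose W-span contains W[e_W, f_W] and whose X-span contains X[f_X, e_X]. -/
variable {V : Type*}

/-- An infinite messy ladder structure on the graph `L`: all vertices lie on two
disjoint induced rays `w` and `x` (the rails) lying in the same end of `L`, `L` is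
locally finite, and there is an edge between the initial vertices of the rails. -/
structure MessyLadder (L : SimpleGraph V) where
  w : ℕ → V
  x : ℕ → V
  w_inj : Function.Injective w
  x_inj : Function.Injective x
  disj : ∀ i j, w i ≠ x j
  w_induced : ∀ i j, L.Adj (w i) (w j) ↔ (i = j + 1 ∨ j = i + 1)
  x_induced : ∀ i j, L.Adj (x i) (x j) ↔ (i = j + 1 ∨ j = i + 1)
  cover : ∀ v : V, (∃ i, v = w i) ∨ (∃ i, v = x i)
  locFin : ∀ v : V, (L.neighborSet v).Finite
  init : L.Adj (w 0) (x 0)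
  sameEnd : ∃ (a b : ℕ → ℕ) (P : ∀ n, L.Walk (w (a n)) (x (b n))),
    (∀ n, (P n).IsPath) ∧
    ∀ m n, m ≠ n → ∀ v, v ∈ (P m).support → v ∈ (P n).support → False

/-- The rung joining `w i` and `x j` is present. -/
def MessyLadder.Rung {L : SimpleGraph V} (M : MessyLadder L) (i j : ℕ) : Prop :=
  L.Adj (M.w i) (M.x j)

/-- The rungs `e = (i₁, j₁)` and `f = (i₂, j₂)` form a cross `(e, f)`:
`e_W < f_W` and `f_X < e_X`.  Its `W`-span is `W[i₁, i₂]` and its `X`-span is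
`X[j₂, j₁]`. -/
def MessyLadder.Cross {L : SimpleGraph V} (M : MessyLadder L) (i1 j1 i2 j2 : ℕ) : Prop :=
  M.Rung i1 j1 ∧ M.Rung i2 j2 ∧ i1 < i2 ∧ j2 < j1

/-- The cross `(i₁,j₁,i₂,j₂)` is full: no other cross has a `W`-span containing
`W[i₁,i₂]` and an `X`-span containing `X[j₂,j₁]`. -/
def MessyLadder.FullCross {L : SimpleGraph V} (M : MessyLadder L) (i1 j1 i2 j2 : ℕ) : Prop :=
  M.Cross i1 j1 i2 j2 ∧
    ¬ ∃ a b c d, M.Cross a b c d ∧ ¬ (a = i1 ∧ b = j1 ∧ c = i2 ∧ d = j2) ∧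
      a ≤ i1 ∧ i2 ≤ c ∧ d ≤ j2 ∧ j1 ≤ b

/-- Two crosses are independent: their `W`-spans are edge-disjoint and their
`X`-spans are edge-disjoint. -/
def IndepCrosses (i1 j1 i2 j2 a1 b1 a2 b2 : ℕ) : Prop :=
  (i2 ≤ a1 ∨ a2 ≤ i1) ∧ (b1 ≤ j2 ∨ j1 ≤ b2)

/-- If an infinite messy ladder has a cross `(e,f)`, then it has a full cross whose
`W`-span contains `W[e_W, f_W]` and whose `X`-span contains `X[f_X, e_X]`. -/
theorem exists_full_cross (L : SimpleGraph V) (M : MessyLadder L)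
    (i1 j1 i2 j2 : ℕ) (h : M.Cross i1 j1 i2 j2) :
    ∃ a b c d, M.FullCross a b c d ∧ a ≤ i1 ∧ i2 ≤ c ∧ d ≤ j2 ∧ j1 ≤ b := by
  classical
  -- the set of b's appearing in rungs with w-end ≤ i1 is finite
  have hBfin : {b : ℕ | ∃ a ≤ i1, M.Rung a b}.Finite := by
    have hT : (⋃ a ∈ Finset.range (i1 + 1), L.neighborSet (M.w a)).Finite :=
      Set.Finite.biUnion (Finset.range (i1 + 1)).finite_toSet fun a _ => M.locFin _
    refine Set.Finite.subset ((hT.preimage (M.x_inj.injOn))) ?_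
    rintro b ⟨a, ha, hr⟩
    simp only [Set.mem_preimage, Set.mem_iUnion]
    exact ⟨a, Finset.mem_range.2 (Nat.lt_succ_of_le ha), hr⟩
  have hCfin : {c : ℕ | ∃ d ≤ j2, M.Rung c d}.Finite := by
    have hT : (⋃ d ∈ Finset.range (j2 + 1), L.neighborSet (M.x d)).Finite :=
      Set.Finite.biUnion (Finset.range (j2 + 1)).finite_toSet fun d _ => M.locFin _
    refine Set.Finite.subset ((hT.preimage (M.w_inj.injOn))) ?_
    rintro c ⟨d, hd, hr⟩
    simp only [Set.mem_preimage, Set.mem_iUnion]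
    exact ⟨d, Finset.mem_range.2 (Nat.lt_succ_of_le hd), hr.symm⟩
  obtain ⟨B, hB⟩ := hBfin.bddAbove
  obtain ⟨C, hC⟩ := hCfin.bddAbove
  set S : Set ℕ := {n | ∃ a b c d, M.Cross a b c d ∧ a ≤ i1 ∧ i2 ≤ c ∧ d ≤ j2 ∧ j1 ≤ b ∧
      n = (i1 - a) + b + c + (j2 - d)} with hS
  have hne : S.Nonempty :=
    ⟨(i1 - i1) + j1 + i2 + (j2 - j2), i1, j1, i2, j2, h, le_refl _, le_refl _, le_refl _,
      le_refl _, rfl⟩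
  have hbdd : BddAbove S := by
    refine ⟨i1 + B + C + j2, ?_⟩
    rintro n ⟨a, b, c, d, hcr, ha, hc, hd, hb, rfl⟩
    have hb' : b ≤ B := hB ⟨a, ha, hcr.1⟩
    have hc' : c ≤ C := hC ⟨d, hd, hcr.2.1⟩
    omega
  have hmem := Nat.sSup_mem hne hbdd
  obtain ⟨a, b, c, d, hcr, ha, hc, hd, hb, hn⟩ := hmem
  refine ⟨a, b, c, d, ⟨hcr, ?_⟩, ha, hc, hd, hb⟩
  rintro ⟨a', b', c', d', hcr', hne', ha', hc', hd', hb'⟩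
  have hmem' : (i1 - a') + b' + c' + (j2 - d') ∈ S :=
    ⟨a', b', c', d', hcr', ha'.trans ha, hc.trans hc', hd'.trans hd, hb.trans hb', rfl⟩
  have hle := le_csSup hbdd hmem'
  omega
end

section
/- Let (e,f) and (g,h) be independent full crosses of a messy ladder (L, W, X), with W-spans W[e_W, f_W], W[g_W, h_W] and X-spans X[f_X, e_X], X[h_X, g_X] respectively. Then f_W ≤ g_W (along W) if and only if e_X ≤ h_X (along X). -/
variable {V : Type*}

/-- For two independent full crosses `(e,f) = (i₁,j₁,i₂,j₂)` and
`(g,h) = (a₁,b₁,a₂,b₂)` of a messy ladder: `f_W ≤ g_W` iff `e_X ≤ h_X`. -/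
theorem full_crosses_ordered (L : SimpleGraph V) (M : MessyLadder L)
    (i1 j1 i2 j2 a1 b1 a2 b2 : ℕ)
    (hef : M.FullCross i1 j1 i2 j2) (hgh : M.FullCross a1 b1 a2 b2)
    (hindep : IndepCrosses i1 j1 i2 j2 a1 b1 a2 b2) :
    i2 ≤ a1 ↔ j1 ≤ b2 := by
  
  obtain ⟨⟨he1, hf1, hi12, hj21⟩, hfull1⟩ := hef
  obtain ⟨⟨hg1, hh1, ha12, hb21⟩, hfull2⟩ := hgh
  obtain ⟨hW, hX⟩ := hindep
  constructor
  · intro h2a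
    rcases hX with hx | hx
    · exfalso
      exact hfull1 ⟨i1, j1, a2, b2, ⟨he1, hh1, by omega, by omega⟩,
        by rintro ⟨_, _, hc, _⟩; omega, le_refl _, by omega, by omega, le_refl _⟩
    · exact hx
  · intro hjb
    rcases hW with hw | hw
    · exact hw
    · exfalso
      exact hfull2 ⟨a1, b1, i2, j2, ⟨hg1, hf1, by omega, by omega⟩,
        by rintro ⟨_, _, hc, _⟩; omega, le_refl _, by omega, by omega, le_refl _⟩
end

section
/- Every infinite messy ladder either has an infinite maximal sequence of pairwise independent full crosses, or contains an infinite cross-free ladder as an induced subgraph. -/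
variable {V : Type*}

/-- The four sequences encode an infinite sequence of pairwise independent full
crosses of the ladder `M`. -/
def GoodCrossSeq {L : SimpleGraph V} (M : MessyLadder L) (I1 J1 I2 J2 : ℕ → ℕ) : Prop :=
  (∀ n, M.FullCross (I1 n) (J1 n) (I2 n) (J2 n)) ∧
  ∀ m n, m ≠ n → IndepCrosses (I1 m) (J1 m) (I2 m) (J2 m) (I1 n) (J1 n) (I2 n) (J2 n)

/-- The infinite sequence of pairwise independent full crosses is maximal: it is
not a proper subsequence of another such sequence, i.e. any such sequence of which
it is a subsequence consists of exactly the same crosses. -/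
def MaximalCrossSeq {L : SimpleGraph V} (M : MessyLadder L) (I1 J1 I2 J2 : ℕ → ℕ) : Prop :=
  GoodCrossSeq M I1 J1 I2 J2 ∧
  ∀ K1 L1 K2 L2 : ℕ → ℕ, GoodCrossSeq M K1 L1 K2 L2 →
    (∃ φ : ℕ → ℕ, StrictMono φ ∧ ∀ n,
        I1 n = K1 (φ n) ∧ J1 n = L1 (φ n) ∧ I2 n = K2 (φ n) ∧ J2 n = L2 (φ n)) →
    ∀ m, ∃ n, K1 m = I1 n ∧ L1 m = J1 n ∧ K2 m = I2 n ∧ L2 m = J2 n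

/-! If crosses start arbitrarily far along `W`, then so do full crosses, on both rails: every
cross lies in a full one, and by local finiteness only finitely many crosses meet a given
initial segment of the rails. A Zorn-maximal independent set of full crosses must then be
infinite, and any enumeration of it is a maximal sequence. Otherwise all crosses start before
some `N`, and the tails of the rails beyond a rung past `N` induce a cross-free ladder. Its
disjoint paths are single rungs going to infinity: the disjoint paths of the common end
eventually avoid any finite set, and each of them contains a rung. -/

def IndepQuads (t u : ℕ × ℕ × ℕ × ℕ) : Prop :=
  IndepCrosses t.1 t.2.1 t.2.2.1 t.2.2.2 u.1 u.2.1 u.2.2.1 u.2.2.2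

instance : Std.Symm IndepQuads := ⟨fun _ _ h => ⟨h.1.symm, h.2.symm⟩⟩

namespace MessyLadder

variable {L : SimpleGraph V} (M : MessyLadder L)

theorem finite_rungs_at_w (i : ℕ) : {j | M.Rung i j}.Finite :=
  (M.locFin (M.w i)).preimage M.x_inj.injOn

theorem finite_rungs_at_x (j : ℕ) : {i | M.Rung i j}.Finite :=
  ((M.locFin (M.x j)).preimage M.w_inj.injOn).subset fun _ h => h.symm

theorem exists_rung_bound (B : ℕ) :
    ∃ C, ∀ i j, M.Rung i j → i < B ∨ j < B → i < C ∧ j < C := by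
  obtain ⟨C, hC⟩ := (((Set.finite_Iio B).biUnion fun i _ => M.finite_rungs_at_w i).union
    ((Set.finite_Iio B).biUnion fun j _ => M.finite_rungs_at_x j)).bddAbove
  refine ⟨max B (C + 1), fun i j hij hB => ?_⟩
  rcases hB with hi | hj
  · have := hC (Set.mem_union_left _ (Set.mem_biUnion hi hij))
    omega
  · have := hC (Set.mem_union_right _ (Set.mem_biUnion hj hij))
    omega

theorem exists_cross_bound (B : ℕ) :
    ∃ C, ∀ i1 j1 i2 j2, M.Cross i1 j1 i2 j2 → i1 < B ∨ j2 < B →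
      i1 < C ∧ j1 < C ∧ i2 < C ∧ j2 < C := by
  obtain ⟨C₁, hC₁⟩ := M.exists_rung_bound B
  obtain ⟨C₂, hC₂⟩ := M.exists_rung_bound C₁
  refine ⟨max C₁ C₂, fun i1 j1 i2 j2 ⟨he, hf, hi, hj⟩ hB => ?_⟩
  rcases hB with hB | hB
  · have := hC₁ _ _ he (.inl hB)
    have := hC₂ _ _ hf (.inr (by omega))
    omega
  · have := hC₁ _ _ hf (.inr hB)
    have := hC₂ _ _ he (.inl (by omega))
    omega

variable {M} in
theorem Cross.exists_fullCross {i1 j1 i2 j2 : ℕ} (h : M.Cross i1 j1 i2 j2) :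
    ∃ a b c d, M.FullCross a b c d ∧ a ≤ i1 ∧ j1 ≤ b ∧ i2 ≤ c ∧ d ≤ j2 := by
  set T : Set (ℕ × ℕ × ℕ × ℕ) := {t | M.Cross t.1 t.2.1 t.2.2.1 t.2.2.2 ∧
    t.1 ≤ i1 ∧ j1 ≤ t.2.1 ∧ i2 ≤ t.2.2.1 ∧ t.2.2.2 ≤ j2}
  obtain ⟨C, hC⟩ := M.exists_cross_bound (i1 + 1)
  have hT : T.Finite := (Set.finite_Iic (C, C, C, C)).subset fun t ht => by
    obtain ⟨hcross, hle, -⟩ := ht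
    have := hC _ _ _ _ hcross (.inl (by omega))
    simp only [Set.mem_Iic, Prod.le_def]
    omega
  -- a cross of `T` with maximal total span is full
  obtain ⟨⟨a, b, c, d⟩, hmem, hmax⟩ := hT.exists_maximalFor
    (fun t => t.2.1 + t.2.2.1 + (i1 - t.1) + (j2 - t.2.2.2)) T
    ⟨(i1, j1, i2, j2), h, le_rfl, le_rfl, le_rfl, le_rfl⟩
  obtain ⟨hcross, ha, hb, hc, hd⟩ : M.Cross a b c d ∧ a ≤ i1 ∧ j1 ≤ b ∧ i2 ≤ c ∧ d ≤ j2 := hmem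
  refine ⟨a, b, c, d, ⟨hcross, ?_⟩, ha, hb, hc, hd⟩
  rintro ⟨a', b', c', d', hcross', hne, h₁, h₂, h₃, h₄⟩
  specialize @hmax (a', b', c', d')
  simp only [T, Set.mem_ofPred_eq] at hmax
  have := hmax ⟨hcross', by omega, by omega, by omega, by omega⟩ (by omega)
  exact hne (by omega)

theorem exists_fullCross_far (h : ∀ N, ∃ i1 j1 i2 j2, M.Cross i1 j1 i2 j2 ∧ N ≤ i1) (B : ℕ) :
    ∃ i1 j1 i2 j2, M.FullCross i1 j1 i2 j2 ∧ B ≤ i1 ∧ B ≤ j2 := by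
  obtain ⟨C, hC⟩ := M.exists_cross_bound B
  obtain ⟨i1, j1, i2, j2, hcross, hi1⟩ := h C
  obtain ⟨a, b, c, d, hfull, -, -, hc, -⟩ := hcross.exists_fullCross
  have hfar : ¬(a < B ∨ d < B) := fun hB => by
    have := hC a b c d hfull.1 hB
    have := hcross.2.2.1
    omega
  exact ⟨a, b, c, d, hfull, by omega, by omega⟩

theorem exists_rung_mem_support {i j : ℕ} (p : L.Walk (M.w i) (M.x j)) :
    ∃ k l, M.Rung k l ∧ M.w k ∈ p.support ∧ M.x l ∈ p.support := by
  obtain ⟨d, hd, ⟨k, hk⟩, hsnd⟩ :=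
    p.exists_boundary_dart (Set.range M.w) ⟨i, rfl⟩ fun ⟨i', h⟩ => M.disj i' j h
  obtain ⟨l, hl⟩ := (M.cover d.snd).resolve_left fun ⟨i', h⟩ => hsnd ⟨i', h.symm⟩
  refine ⟨k, l, ?_, ?_, ?_⟩
  · rw [Rung, hk, ← hl]
    exact d.adj
  · exact hk ▸ p.dart_fst_mem_support_of_mem_darts hd
  · exact hl ▸ p.dart_snd_mem_support_of_mem_darts hd

theorem exists_rung_ge (m : ℕ) : ∃ k l, M.Rung k l ∧ m ≤ k ∧ m ≤ l := by
  obtain ⟨a, b, P, -, hdisj⟩ := M.sameEnd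
  set low : Set V := M.w '' Set.Iio m ∪ M.x '' Set.Iio m
  have hbad : (⋃ v ∈ low, {n | v ∈ (P n).support}).Finite :=
    (((Set.finite_Iio m).image _).union ((Set.finite_Iio m).image _)).biUnion
      fun v _ => Set.Subsingleton.finite fun n₁ h₁ n₂ h₂ =>
        by_contra fun hne => hdisj n₁ n₂ hne v h₁ h₂
  obtain ⟨n, hn⟩ := hbad.infinite_compl.nonempty
  simp only [Set.mem_compl_iff, Set.mem_iUnion, not_exists] at hn
  obtain ⟨k, l, hkl, hk, hl⟩ := M.exists_rung_mem_support (P n)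
  refine ⟨k, l, hkl, not_lt.1 fun hkm => ?_, not_lt.1 fun hlm => ?_⟩
  · exact hn _ (.inl ⟨k, hkm, rfl⟩) hk
  · exact hn _ (.inr ⟨l, hlm, rfl⟩) hl

theorem exists_rung_seq (k l : ℕ) :
    ∃ a b : ℕ → ℕ, StrictMono a ∧ StrictMono b ∧ ∀ n, M.Rung (k + a n) (l + b n) := by
  have hfar : ∀ m, ∃ p : ℕ × ℕ, M.Rung (k + p.1) (l + p.2) ∧ m ≤ p.1 ∧ m ≤ p.2 := fun m => by
    obtain ⟨i, j, hij, hi, hj⟩ := M.exists_rung_ge (k + l + m)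
    refine ⟨(i - k, j - l), ?_, by omega, by omega⟩
    rwa [Nat.add_sub_cancel' (by omega : k ≤ i), Nat.add_sub_cancel' (by omega : l ≤ j)]
  choose r hr hr₁ hr₂ using hfar
  -- each chosen rung lies beyond both ends of the previous one
  let s : ℕ → ℕ := fun n => (fun m => (r m).1 + (r m).2 + 1)^[n] 0
  have hs : ∀ n, s (n + 1) = (r (s n)).1 + (r (s n)).2 + 1 := fun n =>
    Function.iterate_succ_apply' _ n 0
  refine ⟨fun n => (r (s n)).1, fun n => (r (s n)).2, strictMono_nat_of_lt_succ fun n => ?_,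
    strictMono_nat_of_lt_succ fun n => ?_, fun n => hr _⟩
  · have := hr₁ (s (n + 1))
    have := hs n
    omega
  · have := hr₂ (s (n + 1))
    have := hs n
    omega

def tailSet (k l : ℕ) : Set V :=
  Set.range (fun i => M.w (k + i)) ∪ Set.range (fun j => M.x (l + j))

def tail {k l : ℕ} (h : M.Rung k l) : MessyLadder (L.induce (M.tailSet k l)) where
  w i := ⟨M.w (k + i), .inl ⟨i, rfl⟩⟩
  x j := ⟨M.x (l + j), .inr ⟨j, rfl⟩⟩
  w_inj i j hij := by simpa using M.w_inj (congrArg Subtype.val hij)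
  x_inj i j hij := by simpa using M.x_inj (congrArg Subtype.val hij)
  disj i j hij := M.disj _ _ (congrArg Subtype.val hij)
  w_induced i j := (M.w_induced _ _).trans (by omega)
  x_induced i j := (M.x_induced _ _).trans (by omega)
  cover := by
    rintro ⟨v, ⟨i, rfl⟩ | ⟨j, rfl⟩⟩
    exacts [.inl ⟨i, rfl⟩, .inr ⟨j, rfl⟩]
  locFin v := ((M.locFin v).preimage Subtype.val_injective.injOn).subset fun _ hu => hu
  init := h
  sameEnd := by
    obtain ⟨a, b, ha, hb, hab⟩ := M.exists_rung_seq k l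
    refine ⟨a, b, fun n => SimpleGraph.Adj.toWalk (hab n),
      fun n => SimpleGraph.Adj.isPath_toWalk _, fun m n hmn v hm hn => ?_⟩
    change v ∈ [_, _] at hm hn
    simp only [List.mem_cons, List.not_mem_nil, or_false] at hm hn
    rcases hm with rfl | rfl <;> rcases hn with h | h
    · exact hmn (ha.injective (by simpa using M.w_inj (congrArg Subtype.val h)))
    · exact M.disj _ _ (congrArg Subtype.val h)
    · exact M.disj _ _ (congrArg Subtype.val h.symm)
    · exact hmn (hb.injective (by simpa using M.x_inj (congrArg Subtype.val h)))

variable {M} in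
theorem Cross.of_tail {k l : ℕ} {h : M.Rung k l} {i1 j1 i2 j2 : ℕ}
    (hc : (M.tail h).Cross i1 j1 i2 j2) : M.Cross (k + i1) (l + j1) (k + i2) (l + j2) :=
  ⟨hc.1, hc.2.1, Nat.add_lt_add_left hc.2.2.1 k, Nat.add_lt_add_left hc.2.2.2 l⟩

def fullCrosses : Set (ℕ × ℕ × ℕ × ℕ) := {t | M.FullCross t.1 t.2.1 t.2.2.1 t.2.2.2}

def IsIndepFullCrossSet (S : Set (ℕ × ℕ × ℕ × ℕ)) : Prop :=
  S ⊆ M.fullCrosses ∧ S.Pairwise IndepQuads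

theorem exists_maximal_isIndepFullCrossSet : ∃ S, Maximal M.IsIndepFullCrossSet S :=
  zorn_subset {S | M.IsIndepFullCrossSet S} fun c hc hchain =>
    ⟨⋃₀ c, ⟨Set.sUnion_subset fun _ hS => (hc hS).1,
      (Set.pairwise_sUnion hchain.directedOn).2 fun _ hS => (hc hS).2⟩,
      fun _ => Set.subset_sUnion_of_mem⟩

section

variable {M} {S : Set (ℕ × ℕ × ℕ × ℕ)}

theorem mem_of_maximal (hS : Maximal M.IsIndepFullCrossSet S) {t : ℕ × ℕ × ℕ × ℕ}
    (ht : t ∈ M.fullCrosses) (hind : ∀ u ∈ S, t ≠ u → IndepQuads t u) : t ∈ S :=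
  hS.mem_of_prop_insert
    ⟨Set.insert_subset ht hS.prop.1, Set.pairwise_insert_of_symm.2 ⟨hS.prop.2, hind⟩⟩

theorem infinite_of_maximal (hS : Maximal M.IsIndepFullCrossSet S)
    (hfar : ∀ B, ∃ i1 j1 i2 j2, M.FullCross i1 j1 i2 j2 ∧ B ≤ i1 ∧ B ≤ j2) : S.Infinite := by
  intro hfin
  obtain ⟨⟨B₁, B₂, B₃, B₄⟩, hB⟩ := hfin.bddAbove
  obtain ⟨i1, j1, i2, j2, hfull, hi, hj⟩ := hfar (B₁ + B₂ + B₃ + B₄ + 1)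
  have hmem := mem_of_maximal hS (t := (i1, j1, i2, j2)) hfull fun u hu _ => by
    have := hB hu
    simp only [Prod.le_def] at this
    exact ⟨.inr (show u.2.2.1 ≤ i1 by omega), .inl (show u.2.1 ≤ j2 by omega)⟩
  have := hB hmem
  simp only [Prod.le_def] at this
  omega

theorem maximalCrossSeq_of_maximal (hS : Maximal M.IsIndepFullCrossSet S) (e : ℕ ≃ S) :
    MaximalCrossSeq M (fun n => (e n).1.1) (fun n => (e n).1.2.1) (fun n => (e n).1.2.2.1)
      (fun n => (e n).1.2.2.2) := by
  refine ⟨⟨fun n => hS.prop.1 (e n).2, fun m n hmn =>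
    hS.prop.2 (e m).2 (e n).2 fun h => hmn (e.injective (Subtype.ext h))⟩, ?_⟩
  rintro K₁ L₁ K₂ L₂ ⟨hKfull, hKind⟩ ⟨φ, -, hφ⟩ m
  have hφ' : ∀ n, (e n).1 = (K₁ (φ n), L₁ (φ n), K₂ (φ n), L₂ (φ n)) := fun n => by
    obtain ⟨h₁, h₂, h₃, h₄⟩ := hφ n
    ext <;> assumption
  have hmem : (K₁ m, L₁ m, K₂ m, L₂ m) ∈ S := mem_of_maximal hS (hKfull m) fun u hu hne => by
    obtain ⟨n, hn⟩ := e.surjective ⟨u, hu⟩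
    rw [show u = (e n).1 by rw [hn], hφ'] at hne ⊢
    exact hKind m (φ n) fun h => hne (h ▸ rfl)
  obtain ⟨n, hn⟩ := e.surjective ⟨_, hmem⟩
  exact ⟨n, by simp [hn]⟩

end

end MessyLadder

/-- Every infinite messy ladder either has an infinite maximal sequence of
pairwise independent full crosses, or contains an infinite cross-free ladder
(a messy ladder none of whose rungs cross) as an induced subgraph. -/
theorem maximal_cross_seq_or_cross_free (L : SimpleGraph V) (M : MessyLadder L) :
    (∃ I1 J1 I2 J2 : ℕ → ℕ, MaximalCrossSeq M I1 J1 I2 J2) ∨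
    (∃ s : Set V, ∃ M' : MessyLadder (L.induce s),
        ∀ i1 j1 i2 j2, ¬ M'.Cross i1 j1 i2 j2) := by
  by_cases hbdd : ∃ N, ∀ i1 j1 i2 j2, M.Cross i1 j1 i2 j2 → i1 < N
  · obtain ⟨N, hN⟩ := hbdd
    obtain ⟨k, l, hkl, hk, -⟩ := M.exists_rung_ge N
    refine .inr ⟨_, M.tail hkl, fun i1 j1 i2 j2 hc => ?_⟩
    have := hN _ _ _ _ hc.of_tail
    omega
  · push Not at hbdd
    obtain ⟨S, hS⟩ := M.exists_maximal_isIndepFullCrossSet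
    have : Infinite S :=
      (MessyLadder.infinite_of_maximal hS (M.exists_fullCross_far hbdd)).to_subtype
    obtain ⟨e⟩ : Nonempty (ℕ ≃ S) := nonempty_equiv_of_countable
    exact .inl ⟨_, _, _, _, MessyLadder.maximalCrossSeq_of_maximal hS e⟩
end

section
/- For every infinite sequence (G_n) of finite 2-connected graphs with |V(G_n)| = n, whose vertex sets are enumerated v_1, ..., v_n such that for each i with r ≤ i ≤ n there is a j with i - r ≤ j ≤ i making G_n[{v_1,...,v_j}] 2-connected, there exists a countably infinite graph G on vertices u_1, u_2, ... such that for every positive integer m the induced subgraph G[{u_1,...,u_m}] is isomorphic to G_i[{v_1,...,v_m}] for infinitely many i ≥ m, and moreover G is 2-connected. -/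
/-!
Push each `G n` forward to `ℕ` and let `H` be their ultralimit along a nonprincipal
ultrafilter `U`: `a b` is an edge of `H` iff it is an edge of `U`-almost every `G n`. Only
finitely many pairs lie below `m`, so `U`-almost every `G n` agrees with `H` on the first `m`
vertices, and `U`-large sets are infinite. For 2-connectivity, given `v`, `a`, `b` below `m`,
take `n` agreeing with `H` below `m + r`; the enumeration hypothesis yields `m ≤ j ≤ m + r` with
the first `j` vertices of `G n` 2-connected, and that set is then also 2-connected in `H`.
-/

/-- The subgraph of `G` induced on `s` is 2-connected: it has at least three
vertices, is connected, and deleting any one of its vertices leaves it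
connected. -/
def TwoConnOn {V : Type*} (G : SimpleGraph V) (s : Set V) : Prop :=
  3 ≤ Nat.card s ∧ (G.induce s).Connected ∧
    ∀ v ∈ s, (G.induce (s \ {v})).Connected

/-- An infinite graph is 2-connected: deleting any single vertex leaves a
connected graph. -/
def TwoConnected {V : Type*} (G : SimpleGraph V) : Prop :=
  ∀ v : V, (G.induce {u | u ≠ v}).Connected

open Filter

namespace SimpleGraph

variable {ι V W : Type*}

def ultraLimit (U : Ultrafilter ι) (G : ι → SimpleGraph V) : SimpleGraph V where
  Adj a b := ∀ᶠ i in U, (G i).Adj a b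
  symm := ⟨fun _ _ h => h.mono fun _ hi => hi.symm⟩
  loopless := ⟨fun a h => let ⟨i, hi⟩ := h.exists; (G i).loopless.irrefl a hi⟩

@[simp]
theorem ultraLimit_adj {U : Ultrafilter ι} {G : ι → SimpleGraph V} {a b : V} :
    (ultraLimit U G).Adj a b ↔ ∀ᶠ i in U, (G i).Adj a b := Iff.rfl

theorem eventually_forall_ultraLimit_adj_iff (U : Ultrafilter ι) (G : ι → SimpleGraph V)
    {s : Set V} (hs : s.Finite) :
    ∀ᶠ i in U, ∀ a ∈ s, ∀ b ∈ s, ((ultraLimit U G).Adj a b ↔ (G i).Adj a b) := by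
  simp only [eventually_all_finite hs, ultraLimit_adj]
  intro a _ b _
  by_cases hab : (ultraLimit U G).Adj a b
  · exact hab.mono fun _ hi => iff_of_true hab hi
  · exact (Ultrafilter.eventually_not.2 hab).mono fun _ hi => iff_of_false hab hi

theorem induce_eq_of_forall_adj_iff {H K : SimpleGraph V} {s : Set V}
    (h : ∀ a ∈ s, ∀ b ∈ s, (H.Adj a b ↔ K.Adj a b)) : H.induce s = K.induce s := by
  ext ⟨a, ha⟩ ⟨b, hb⟩
  exact h a ha b hb

noncomputable def induceIsoMapImage (G : SimpleGraph V) (f : V ↪ W) (s : Set V) :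
    G.induce s ≃g (G.map f).induce (f '' s) where
  toEquiv := Equiv.Set.image f s f.injective
  map_rel_iff' := by simp

theorem twoConnected_of_forall_exists_twoConnOn {H : SimpleGraph V}
    (h : ∀ v a b : V, ∃ s, v ∈ s ∧ a ∈ s ∧ b ∈ s ∧ TwoConnOn H s) : TwoConnected H := by
  intro v
  refine connected_iff _ |>.2 ⟨?_, ?_⟩
  · rintro ⟨a, ha⟩ ⟨b, hb⟩
    obtain ⟨s, hv, has, hbs, -, -, hs⟩ := h v a b
    exact ((hs v hv).preconnected ⟨a, has, ha⟩ ⟨b, hbs, hb⟩).map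
      (H.induceHomOfLE fun _ hu => hu.2).toHom
  · obtain ⟨s, hv, -, -, -, -, hs⟩ := h v v v
    obtain ⟨⟨u, -, hu⟩⟩ := (hs v hv).nonempty
    exact ⟨⟨u, hu⟩⟩

end SimpleGraph

open SimpleGraph

theorem TwoConnOn.congr {V : Type*} {H K : SimpleGraph V} {s : Set V}
    (h : ∀ a ∈ s, ∀ b ∈ s, (H.Adj a b ↔ K.Adj a b)) (hH : TwoConnOn H s) : TwoConnOn K s := by
  have hsub : ∀ t ⊆ s, H.induce t = K.induce t := fun t ht =>
    induce_eq_of_forall_adj_iff fun a ha b hb => h a (ht ha) b (ht hb)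
  obtain ⟨hcard, hconn, hdel⟩ := hH
  refine ⟨hcard, hsub s subset_rfl ▸ hconn, fun v hv => ?_⟩
  exact hsub _ Set.sdiff_subset ▸ hdel v hv

theorem TwoConnOn.map {V W : Type*} {G : SimpleGraph V} {s : Set V} (f : V ↪ W)
    (hG : TwoConnOn G s) : TwoConnOn (G.map f) (f '' s) := by
  obtain ⟨hcard, hconn, hdel⟩ := hG
  refine ⟨?_, (G.induceIsoMapImage f s).connected_iff.1 hconn, ?_⟩
  · rwa [Nat.card_image_of_injective f.injective]
  · rintro _ ⟨v, hv, rfl⟩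
    rw [← Set.image_singleton, ← Set.image_sdiff f.injective]
    exact (G.induceIsoMapImage f _).connected_iff.1 (hdel v hv)

theorem Fin.image_valEmbedding_setOf_lt {N m : ℕ} (h : m ≤ N) :
    Fin.valEmbedding '' {k : Fin N | (k : ℕ) < m} = {x | x < m} := by
  ext x
  simp only [Set.mem_image, Set.mem_ofPred_eq, Fin.valEmbedding_apply]
  exact ⟨by rintro ⟨k, hk, rfl⟩; exact hk, fun hx => ⟨⟨x, by omega⟩, hx, rfl⟩⟩

theorem compactness_two_connected_general (r : ℕ)
    (G : ∀ n : ℕ, SimpleGraph (Fin (n + 3)))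
    (henum : ∀ n, ∀ i : ℕ, r ≤ i → i ≤ n + 3 →
      ∃ j : ℕ, i - r ≤ j ∧ j ≤ i ∧
        TwoConnOn (G n) {k : Fin (n + 3) | (k : ℕ) < j}) :
    ∃ H : SimpleGraph ℕ,
      (∀ m : ℕ, 0 < m →
        {i : ℕ | m ≤ i + 3 ∧
          Nonempty ((H.induce {x : ℕ | x < m}) ≃g
            ((G i).induce {k : Fin (i + 3) | (k : ℕ) < m}))}.Infinite) ∧
      TwoConnected H := by
  let G' : ℕ → SimpleGraph ℕ := fun n => (G n).map Fin.valEmbedding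
  let H := ultraLimit (hyperfilter ℕ) G'
  have agree : ∀ m, ∀ᶠ n in hyperfilter ℕ,
      m ≤ n + 3 ∧ ∀ a ∈ Set.Iio m, ∀ b ∈ Set.Iio m, (H.Adj a b ↔ (G' n).Adj a b) :=
    fun m => Eventually.and
      (Nat.hyperfilter_le_atTop <| (eventually_ge_atTop m).mono fun _ h => by omega)
      (eventually_forall_ultraLimit_adj_iff _ G' (Set.finite_Iio m))
  refine ⟨H, fun m _ => ?_, twoConnected_of_forall_exists_twoConnOn fun v a b => ?_⟩
  · refine Set.Infinite.mono (fun n hn => ⟨hn.1, ?_⟩) (Set.Finite.notMem_hyperfilter · (agree m))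
    obtain ⟨hmn, hn⟩ := hn
    have heq : H.induce {x | x < m} = (G' n).induce {x | x < m} := induce_eq_of_forall_adj_iff hn
    rw [heq, ← Fin.image_valEmbedding_setOf_lt hmn]
    exact ⟨(induceIsoMapImage _ _ _).symm⟩
  · obtain ⟨m, hvm, ham, hbm⟩ : ∃ m, v < m ∧ a < m ∧ b < m :=
      ⟨max v (max a b) + 1, by omega, by omega, by omega⟩
    obtain ⟨n, hmn, hn⟩ := (agree (m + r)).exists
    obtain ⟨j, hmj, hjr, hj⟩ := henum n (m + r) (Nat.le_add_left r m) (by omega)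
    have hsub : Fin.valEmbedding '' {k : Fin (n + 3) | (k : ℕ) < j} ⊆ Set.Iio (m + r) := by
      rintro _ ⟨k, hk, rfl⟩
      exact lt_of_lt_of_le hk hjr
    have mem : ∀ x, x < m → x ∈ Fin.valEmbedding '' {k : Fin (n + 3) | (k : ℕ) < j} :=
      fun x hx => ⟨⟨x, by omega⟩, show x < j by omega, rfl⟩
    refine ⟨_, mem v hvm, mem a ham, mem b hbm, ?_⟩
    exact (hj.map Fin.valEmbedding).congr fun x hx y hy => (hn x (hsub hx) y (hsub hy)).symm

/-- **Compactness construction.** Fix `r > 2`.  Given a sequence `G_3, G_4, …` of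
finite 2-connected graphs, where `G (n)` has the `n + 3` vertices `0, …, n + 2`
enumerated so that for each `i` with `r ≤ i ≤ n + 3` there is `j` with
`i - r ≤ j ≤ i` making the first `j` vertices induce a 2-connected subgraph,
there is a countably infinite graph `H` on vertices `0, 1, 2, …` such that for
every positive `m` the subgraph induced by the first `m` vertices of `H` is
isomorphic to the subgraph induced by the first `m` vertices of `G (i)` for
infinitely many `i` with `m ≤ i + 3`, and moreover `H` is 2-connected. -/
theorem compactness_two_connected (r : ℕ) (hr : 2 < r)
    (G : ∀ n : ℕ, SimpleGraph (Fin (n + 3)))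
    (h2 : ∀ n, TwoConnOn (G n) Set.univ)
    (henum : ∀ n, ∀ i : ℕ, r ≤ i → i ≤ n + 3 →
      ∃ j : ℕ, i - r ≤ j ∧ j ≤ i ∧
        TwoConnOn (G n) {k : Fin (n + 3) | (k : ℕ) < j}) :
    ∃ H : SimpleGraph ℕ,
      (∀ m : ℕ, 0 < m →
        {i : ℕ | m ≤ i + 3 ∧
          Nonempty ((H.induce {x : ℕ | x < m}) ≃g
            ((G i).induce {k : Fin (i + 3) | (k : ℕ) < m}))}.Infinite) ∧
      TwoConnected H :=
  compactness_two_connected_general r G henum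
end

section
/- Let G be an infinite locally-finite graph with two disjoint induced rays P and Q in the same end such that G has no edges between P and Q, and let J_1 be a finite tie of P ∪ Q. Then only finitely many finite ties of P ∪ Q cross J_1. -/
variable {V : Type*}

/-- `r` is an induced ray in `G`. -/
def IsInducedRay (G : SimpleGraph V) (r : ℕ → V) : Prop :=
  Function.Injective r ∧ ∀ i j, G.Adj (r i) (r j) ↔ (i = j + 1 ∨ j = i + 1)

/-- The two rays `p` and `q` lie in the same end of `G`: there are infinitely many
pairwise-disjoint paths joining them. -/
def SameEnd (G : SimpleGraph V) (p q : ℕ → V) : Prop :=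
  ∃ (a b : ℕ → ℕ) (P : ∀ n, G.Walk (p (a n)) (q (b n))),
    (∀ n, (P n).IsPath) ∧
    ∀ m n, m ≠ n → ∀ v, v ∈ (P m).support → v ∈ (P n).support → False

/-- `{x,y}` is an edge of the ray `p`. -/
def RailEdge (p : ℕ → V) (x y : V) : Prop :=
  ∃ i, (x = p i ∧ y = p (i + 1)) ∨ (x = p (i + 1) ∧ y = p i)

/-- The graph `G` minus the edges of the two rays `p` and `q`. -/
def tieGraph (G : SimpleGraph V) (p q : ℕ → V) : SimpleGraph V where
  Adj x y := G.Adj x y ∧ ¬ RailEdge p x y ∧ ¬ RailEdge q x y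
  symm := ⟨by
    rintro x y ⟨h1, h2, h3⟩
    refine ⟨h1.symm, fun ⟨i, hi⟩ => h2 ⟨i, ?_⟩, fun ⟨i, hi⟩ => h3 ⟨i, ?_⟩⟩ <;> tauto⟩
  loopless := ⟨fun x h => G.loopless.irrefl x h.1⟩

/-- `J` is a tie of `P ∪ Q` in `G`: a connected component of `G` minus the edges
of `p` and `q` that meets both rays. -/
def IsTie (G : SimpleGraph V) (p q : ℕ → V) (J : Set V) : Prop :=
  ((tieGraph G p q).induce J).Connected ∧
    (∀ x ∈ J, ∀ y, (tieGraph G p q).Adj x y → y ∈ J) ∧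
    (∃ i, p i ∈ J) ∧ (∃ j, q j ∈ J)

/-- Attachment positions of the tie `J` on the ray `p`. -/
def attOn (p : ℕ → V) (J : Set V) : Set ℕ := {i | p i ∈ J}

/-- Two finite ties cross: with spans `P[pl_i, pr_i]`, `Q[ql_i, qr_i]` given by the
least/greatest attachments, either `qr₁ < ql₂` and `pr₂ < pl₁`, or
`pr₁ < pl₂` and `qr₂ < ql₁`. -/
def TiesCross (p q : ℕ → V) (J1 J2 : Set V) : Prop :=
  (sSup (attOn q J1) < sInf (attOn q J2) ∧ sSup (attOn p J2) < sInf (attOn p J1)) ∨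
  (sSup (attOn p J1) < sInf (attOn p J2) ∧ sSup (attOn q J2) < sInf (attOn q J1))

/-! A crossing tie `J` has an attachment strictly before the span of `J₁` on `P` or on `Q`,
so it meets the finite set of vertices of `P` and `Q` lying before those spans. Distinct ties
are disjoint, being components of `G` minus the edges of the rays, so there are only
finitely many of them. -/

theorem SimpleGraph.subset_of_induce_connected {H : SimpleGraph V} {A B : Set V}
    (hA : (H.induce A).Connected) (hB : ∀ x ∈ B, ∀ y, H.Adj x y → y ∈ B)
    {v : V} (hvA : v ∈ A) (hvB : v ∈ B) : A ⊆ B := by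
  have walk_mem : ∀ (a b : A) (w : (H.induce A).Walk a b), (a : V) ∈ B → (b : V) ∈ B := by
    intro a b w
    induction w with
    | nil => exact id
    | cons hadj _ ih => exact fun ha => ih (hB _ ha _ hadj)
  intro x hx
  obtain ⟨w⟩ := hA.preconnected ⟨v, hvA⟩ ⟨x, hx⟩
  exact walk_mem _ _ w hvB

theorem IsTie.eq_of_mem_of_mem {G : SimpleGraph V} {p q : ℕ → V} {A B : Set V}
    (hA : IsTie G p q A) (hB : IsTie G p q B) {v : V} (hvA : v ∈ A) (hvB : v ∈ B) :
    A = B :=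
  (SimpleGraph.subset_of_induce_connected hA.1 hB.2.1 hvA hvB).antisymm
    (SimpleGraph.subset_of_induce_connected hB.1 hA.2.1 hvB hvA)

theorem le_sSup_attOn {r : ℕ → V} (hr : Function.Injective r) {J : Set V} (hJ : J.Finite)
    {i : ℕ} (hi : r i ∈ J) : i ≤ sSup (attOn r J) :=
  le_csSup (hJ.preimage hr.injOn).bddAbove hi

theorem TiesCross.exists_attachment_before {G : SimpleGraph V} {p q : ℕ → V}
    (hp : Function.Injective p) (hq : Function.Injective q) {J J1 : Set V}
    (hJ : IsTie G p q J) (hJfin : J.Finite) (hcross : TiesCross p q J J1) :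
    (∃ j < sInf (attOn q J1), q j ∈ J) ∨ (∃ i < sInf (attOn p J1), p i ∈ J) := by
  obtain ⟨⟨i, hi⟩, ⟨j, hj⟩⟩ := hJ.2.2
  rcases hcross with ⟨hq_before, -⟩ | ⟨hp_before, -⟩
  · exact Or.inl ⟨j, (le_sSup_attOn hq hJfin hj).trans_lt hq_before, hj⟩
  · exact Or.inr ⟨i, (le_sSup_attOn hp hJfin hi).trans_lt hp_before, hi⟩

theorem Set.Finite.of_forall_meets_of_eq_of_mem {S : Set (Set V)} {T : Set V}
    (hT : T.Finite) (hmeets : ∀ J ∈ S, ∃ v ∈ T, v ∈ J)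
    (heq : ∀ A ∈ S, ∀ B ∈ S, ∀ v, v ∈ A → v ∈ B → A = B) : S.Finite := by
  refine (hT.biUnion fun v _ => Set.Subsingleton.finite (s := {J ∈ S | v ∈ J}) ?_).subset ?_
  · exact fun A ⟨hA, hvA⟩ B ⟨hB, hvB⟩ => heq A hA B hB v hvA hvB
  · intro J hJ
    obtain ⟨v, hvT, hvJ⟩ := hmeets J hJ
    exact Set.mem_biUnion hvT ⟨hJ, hvJ⟩

theorem finitely_many_crossing_ties_general (G : SimpleGraph V)
    (p q : ℕ → V) (hp : IsInducedRay G p) (hq : IsInducedRay G q)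
    (J1 : Set V) :
    {J : Set V | IsTie G p q J ∧ J.Finite ∧ TiesCross p q J J1}.Finite := by
  let T : Set V := q '' Set.Iio (sInf (attOn q J1)) ∪ p '' Set.Iio (sInf (attOn p J1))
  have hT : T.Finite := ((Set.finite_Iio _).image q).union ((Set.finite_Iio _).image p)
  refine hT.of_forall_meets_of_eq_of_mem ?_ fun A hA B hB v => hA.1.eq_of_mem_of_mem hB.1
  rintro J ⟨hJ, hJfin, hcross⟩
  rcases hcross.exists_attachment_before hp.1 hq.1 hJ hJfin with ⟨j, hj, hqj⟩ | ⟨i, hi, hpi⟩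
  · exact ⟨q j, Or.inl ⟨j, hj, rfl⟩, hqj⟩
  · exact ⟨p i, Or.inr ⟨i, hi, rfl⟩, hpi⟩

/-- In an infinite locally-finite graph with two disjoint induced rays `P`, `Q` in
the same end and no edges between them, any finite tie `J₁` of `P ∪ Q` is crossed
by only finitely many finite ties. -/
theorem finitely_many_crossing_ties [Infinite V] (G : SimpleGraph V)
    (hlf : ∀ v : V, (G.neighborSet v).Finite)
    (p q : ℕ → V) (hp : IsInducedRay G p) (hq : IsInducedRay G q)
    (hdisj : ∀ i j, p i ≠ q j) (hend : SameEnd G p q)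
    (hnoedge : ∀ i j, ¬ G.Adj (p i) (q j))
    (J1 : Set V) (hJ1 : IsTie G p q J1) (hfin : J1.Finite) :
    {J : Set V | IsTie G p q J ∧ J.Finite ∧ TiesCross p q J J1}.Finite :=
  finitely_many_crossing_ties_general G p q hp hq J1
end
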